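/- Let Z be a commutative ring that is a finitely generated algebra over a Noetherian ring A, and let H be an associative A-algebra containing Z in its center such that H is a finitely generated Z-module. Then for any simple H-module M, the annihilator of M in Z is a maximal ideal of Z, and M is a finitely generated module over Z/ann_Z(M). -/
import Mathlib


universe u

/-- Let `A` be a commutative Noetherian ring, `Z` a commutative `A`-algebra of finite type, and
`H` an (associative, unital) `A`-algebra containing `Z` in its center (encoded by a central
injective algebra map `Z → H`) such that `H` is a finitely generated `Z`-module.  Then for any
simple `H`-module `M`, the annihilator of `M` in `Z` is a maximal ideal of `Z` and `M` is a
finitely generated `Z`-module (equivalently, a finitely generated, indeed finite-dimensional,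
module over the field `Z / ann_Z(M)`). -/
theorem simple_module_finite_over_center (A : Type u) [CommRing A] [IsNoetherianRing A]
    (Z : Type u) [CommRing Z] [Algebra A Z] (hft : Algebra.FiniteType A Z)
    (H : Type u) [Ring H] [Algebra A H] [Algebra Z H] [IsScalarTower A Z H]
    (hinj : Function.Injective (algebraMap Z H))
    [Module.Finite Z H]
    (M : Type u) [AddCommGroup M] [Module H M] [Module Z M] [IsScalarTower Z H M]
    [IsSimpleModule H M] :
    (Module.annihilator Z M).IsMaximal ∧ Module.Finite Z M := by
  -- M is nontrivial
  have hM : Nontrivial M := IsSimpleModule.nontrivial H M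
  obtain ⟨m₀, hm₀⟩ := exists_ne (0 : M)
  -- M is cyclic over H, hence finite over Z
  have hspan : Submodule.span H {m₀} = ⊤ := by
    rcases eq_bot_or_eq_top (Submodule.span H {m₀}) with h | h
    · exact absurd (by
        have : m₀ ∈ Submodule.span H {m₀} := Submodule.mem_span_singleton_self m₀
        rwa [h, Submodule.mem_bot] at this) hm₀
    · exact h
  -- Z-linear surjection H → M
  have hZHM : ∀ (z : Z) (h : H) (m : M), z • (h • m) = h • (z • m) := by
    intro z h m
    rw [← algebraMap_smul H z (h • m), ← mul_smul, Algebra.commutes z h, mul_smul,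
      algebraMap_smul]
  have hfin : Module.Finite Z M := by
    let f : H →ₗ[Z] M :=
      { toFun := fun h => h • m₀
        map_add' := fun x y => add_smul x y m₀
        map_smul' := fun z h => by
          simp only [RingHom.id_apply]
          rw [← algebraMap_smul H z h, smul_assoc, algebraMap_smul] }
    have hsurj : Function.Surjective f := by
      intro m
      have : m ∈ Submodule.span H {m₀} := by rw [hspan]; trivial
      rcases Submodule.mem_span_singleton.mp this with ⟨h, rfl⟩
      exact ⟨h, rfl⟩
    exact Module.Finite.of_surjective f hsurj
  refine ⟨?_, hfin⟩
  -- Maximality of the annihilator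
  rw [Ideal.isMaximal_iff]
  constructor
  · intro h1
    exact hm₀ (by simpa using Module.mem_annihilator.mp h1 m₀)
  · intro J x hIJ hxI hxJ
    -- x acts H-linearly and nonzero on M, hence bijectively by Schur
    let φ : M →ₗ[H] M :=
      { toFun := fun m => x • m
        map_add' := fun a b => smul_add x a b
        map_smul' := fun h m => (hZHM x h m) }
    have hφ : φ ≠ 0 := by
      intro h0
      apply hxI
      rw [Module.mem_annihilator]
      intro m
      exact congrFun (congrArg DFunLike.coe h0) m
    have hbij : Function.Surjective φ := LinearMap.surjective_of_ne_zero hφ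
    -- Hence M = x • M ⊆ J • M, Nakayama
    have hle : (⊤ : Submodule Z M) ≤ J • ⊤ := by
      intro m _
      obtain ⟨m', rfl⟩ := hbij m
      exact Submodule.smul_mem_smul hxJ trivial
    obtain ⟨r, hr1, hr0⟩ := Submodule.exists_sub_one_mem_and_smul_eq_zero_of_fg_of_le_smul J ⊤
      (Module.finite_def.mp hfin) hle
    have hrI : r ∈ Module.annihilator Z M :=
      Module.mem_annihilator.mpr fun m => hr0 m trivial
    have : (1 : Z) = r - (r - 1) := by ring
    rw [this]
    exact J.sub_mem (hIJ hrI) hr1
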